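/- arXiv:1808.01827 — 2 statements merged into one kernel-verified Lean document; each statement's English description precedes it below -/
import Mathlib

section
/- Let G be a connected finite simple graph and X an efficient dominating set with |X| ≥ 2. Then for every x ∈ X there exists x' ∈ X with x' ≠ x and d(x, x') = 3. -/
open SimpleGraph

def IsEffDomSet {V : Type*} (G : SimpleGraph V) (X : Set V) : Prop :=
  (∀ x ∈ X, ∀ y ∈ X, ¬ G.Adj x y) ∧
  (∀ v : V, ∃ x ∈ X, v ∈ insert x (G.neighborSet x)) ∧
  (∀ v : V, v ∉ X → ∃! x, x ∈ X ∧ G.Adj v x)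

/-!
Two distinct vertices of an efficient dominating set `X` are neither adjacent nor share a
neighbour, so they are at distance at least `3`. Given `x ∈ X` and another `x' ∈ X`, a shortest
path from `x` to `x'` passes through a vertex `v` with `d(x, v) = 2`. Then `v ∉ X`, and the unique
`y ∈ X` adjacent to `v` satisfies `3 ≤ d(x, y) ≤ d(x, v) + 1 = 3`.
-/

namespace SimpleGraph

variable {V : Type*} {G : SimpleGraph V}

lemma Reachable.exists_dist_eq_of_le {u w : V} (hr : G.Reachable u w) {k : ℕ}
    (hk : k ≤ G.dist u w) : ∃ v, G.dist u v = k := by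
  obtain ⟨p, hp⟩ := hr.exists_walk_length_eq_dist
  refine ⟨p.getVert k, (length_eq_dist_of_subwalk hp (p.isSubwalk_take k)).symm.trans ?_⟩
  simp [Walk.take_length, hp, hk]

end SimpleGraph

namespace IsEffDomSet

variable {V : Type*} {G : SimpleGraph V} {X : Set V}

lemma two_lt_edist (hX : IsEffDomSet G X) {a b : V} (ha : a ∈ X) (hb : b ∈ X) (hne : a ≠ b) :
    2 < G.edist a b := by
  refine two_lt_edist_iff.mpr ⟨hne, hX.1 a ha b hb, Set.eq_empty_of_forall_notMem ?_⟩
  rintro v ⟨hav, hbv⟩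
  have hvX : v ∉ X := fun hv => hX.1 a ha v hv hav
  exact hne ((hX.2.2 v hvX).unique ⟨ha, hav.symm⟩ ⟨hb, hbv.symm⟩)

lemma three_le_dist (hX : IsEffDomSet G X) {a b : V} (hr : G.Reachable a b) (ha : a ∈ X)
    (hb : b ∈ X) (hne : a ≠ b) : 3 ≤ G.dist a b := by
  have h := hX.two_lt_edist ha hb hne
  rw [← hr.coe_dist_eq_edist] at h
  exact_mod_cast h

lemma exists_dist_eq_three (hX : IsEffDomSet G X) {x v : V} (hx : x ∈ X)
    (hv : G.dist x v = 2) : ∃ y ∈ X, y ≠ x ∧ G.dist x y = 3 := by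
  have hr : G.Reachable x v := Reachable.of_dist_ne_zero (by omega)
  have hvX : v ∉ X := by
    intro hvX
    have hvx : v ≠ x := by rintro rfl; simp at hv
    have := hX.three_le_dist hr hx hvX hvx.symm
    omega
  obtain ⟨y, ⟨hyX, hvy⟩, -⟩ := hX.2.2 v hvX
  have hyx : y ≠ x := by
    rintro rfl
    rw [dist_eq_one_iff_adj.mpr hvy.symm] at hv
    omega
  have hle : G.dist x y ≤ 3 := by
    have := hr.dist_triangle_left y
    rw [hv, dist_eq_one_iff_adj.mpr hvy] at this
    exact this
  exact ⟨y, hyX, hyx, hle.antisymm (hX.three_le_dist (hr.trans hvy.reachable) hx hyX hyx.symm)⟩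

end IsEffDomSet

theorem stmt8_general {V : Type*} (G : SimpleGraph V) (hconn : G.Connected)
    (X : Finset V) (hX : IsEffDomSet G (X : Set V)) (hcard : 2 ≤ X.card) :
    ∀ x ∈ X, ∃ x' ∈ X, x' ≠ x ∧ G.dist x x' = 3 := by
  intro x hx
  obtain ⟨x', hx', hne⟩ := Finset.exists_mem_ne hcard x
  have hfar : 2 ≤ G.dist x x' := (hX.three_le_dist (hconn x x') hx hx' hne.symm).trans' (by omega)
  obtain ⟨v, hv⟩ := (hconn x x').exists_dist_eq_of_le hfar
  exact hX.exists_dist_eq_three hx hv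

theorem stmt8 {V : Type*} [Fintype V] (G : SimpleGraph V) (hconn : G.Connected)
    (X : Finset V) (hX : IsEffDomSet G (X : Set V)) (hcard : 2 ≤ X.card) :
    ∀ x ∈ X, ∃ x' ∈ X, x' ≠ x ∧ G.dist x x' = 3 :=
  stmt8_general G hconn X hX hcard
end

section
/- If X is an efficient dominating set of a finite simple graph G, then X is a maximal independent set (i.e., an independent dominating set), and moreover X is a minimum-cardinality dominating set of G. -/
/-
An efficient dominating set X is independent by definition. It is maximal independent because
every vertex outside X has a neighbour in X. It is a minimum dominating set because each closed
neighbourhood N[d] contains at most one vertex of X: if d ∈ X, independence forces N[d] ∩ X = {d},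
and if d ∉ X, the uniqueness clause gives it. Choosing for each x ∈ X a vertex of a dominating set
D whose closed neighbourhood contains x is therefore an injection X → D.
-/

open SimpleGraph

section

variable {V : Type*} {G : SimpleGraph V}

theorem SimpleGraph.eq_of_dominating_subset_of_independent {X Y : Set V}
    (hX : ∀ v : V, ∃ x ∈ X, v ∈ insert x (G.neighborSet x))
    (hY : ∀ x ∈ Y, ∀ y ∈ Y, ¬ G.Adj x y) (hXY : X ⊆ Y) : Y = X := by
  refine (Set.Subset.antisymm hXY fun y hy => ?_).symm
  obtain ⟨x, hx, hyx | hxy⟩ := hX y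
  · exact hyx ▸ hx
  · exact absurd hxy.symm (hY y hy x (hXY hx))

theorem IsEffDomSet.eq_of_mem_insert_neighborSet {X : Set V} (hX : IsEffDomSet G X)
    {d x₁ x₂ : V} (hx₁ : x₁ ∈ X) (hx₂ : x₂ ∈ X)
    (hd₁ : x₁ ∈ insert d (G.neighborSet d)) (hd₂ : x₂ ∈ insert d (G.neighborSet d)) :
    x₁ = x₂ := by
  obtain ⟨hind, -, huniq⟩ := hX
  have eq_of_mem {x : V} (hx : x ∈ X) (hd : x ∈ insert d (G.neighborSet d)) (hdX : d ∈ X) :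
      x = d :=
    hd.elim id fun hdx => absurd hdx (hind d hdX x hx)
  by_cases hdX : d ∈ X
  · exact (eq_of_mem hx₁ hd₁ hdX).trans (eq_of_mem hx₂ hd₂ hdX).symm
  · have adj_of_mem {x : V} (hx : x ∈ X) (hd : x ∈ insert d (G.neighborSet d)) : G.Adj d x :=
      hd.resolve_left fun hxd => hdX (hxd ▸ hx)
    exact (huniq d hdX).unique ⟨hx₁, adj_of_mem hx₁ hd₁⟩ ⟨hx₂, adj_of_mem hx₂ hd₂⟩

theorem IsEffDomSet.card_le_of_dominating {X D : Finset V} (hX : IsEffDomSet G (X : Set V))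
    (hD : ∀ v : V, ∃ d ∈ D, v ∈ insert d (G.neighborSet d)) : X.card ≤ D.card := by
  choose f hfD hf using hD
  exact Finset.card_le_card_of_injOn f (fun x _ => hfD x) fun x₁ hx₁ x₂ hx₂ hfx =>
    hX.eq_of_mem_insert_neighborSet hx₁ hx₂ (hf x₁) (hfx ▸ hf x₂)

end

theorem stmt13_general {V : Type*} (G : SimpleGraph V) (X : Finset V)
    (hX : IsEffDomSet G (X : Set V)) :
    ((∀ x ∈ X, ∀ y ∈ X, ¬ G.Adj x y) ∧
      ∀ Y : Set V, (∀ x ∈ Y, ∀ y ∈ Y, ¬ G.Adj x y) → (X : Set V) ⊆ Y → Y = (X : Set V)) ∧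
    (∀ D : Finset V, (∀ v : V, ∃ d ∈ D, v ∈ insert d (G.neighborSet d)) →
      X.card ≤ D.card) :=
  ⟨⟨hX.1, fun _ hY hXY => eq_of_dominating_subset_of_independent hX.2.1 hY hXY⟩,
    fun _ hD => hX.card_le_of_dominating hD⟩

theorem stmt13 {V : Type*} [Fintype V] (G : SimpleGraph V) (X : Finset V)
    (hX : IsEffDomSet G (X : Set V)) :
    ((∀ x ∈ X, ∀ y ∈ X, ¬ G.Adj x y) ∧
      ∀ Y : Set V, (∀ x ∈ Y, ∀ y ∈ Y, ¬ G.Adj x y) → (X : Set V) ⊆ Y → Y = (X : Set V)) ∧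
    (∀ D : Finset V, (∀ v : V, ∃ d ∈ D, v ∈ insert d (G.neighborSet d)) →
      X.card ≤ D.card) :=
  stmt13_general G X hX
end
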